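/- arXiv:math/0510552 — 11 statements merged into one kernel-verified Lean document; each statement's English description precedes it below -/
import Mathlib

section
/- If $n \geq 3$ and $d_1 \leq d_2 \leq \cdots \leq d_n$ are integers with each $d_i \geq 2$, and $d_1 < d_n$, then setting $\alpha = \sum_{i=1}^n d_i$, we have $n! \cdot \prod_{i=1}^n d_i \leq \prod_{i=1}^n (\alpha - i)$. -/
theorem stmt0 (n : ℕ) (hn : 3 ≤ n) (d : ℕ → ℤ)
    (hd2 : ∀ i, 1 ≤ i → i ≤ n → 2 ≤ d i)
    (hmono : ∀ i j, 1 ≤ i → i ≤ j → j ≤ n → d i ≤ d j)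
    (hlt : d 1 < d n) :
    (n.factorial : ℤ) * ∏ i ∈ Finset.Icc 1 n, d i ≤
      ∏ i ∈ Finset.Icc 1 n, ((∑ j ∈ Finset.Icc 1 n, d j) - (i : ℤ)) := by
  set α := ∑ j ∈ Finset.Icc 1 n, d j with hα
  have key : ∀ i ∈ Finset.Icc 1 n, ((n:ℤ)+1-(i:ℤ)) * d i ≤ α - (i:ℤ) := by
    intro i hi
    simp only [Finset.mem_Icc] at hi
    obtain ⟨hi1, hin⟩ := hi
    rcases eq_or_lt_of_le hi1 with h1 | h2
    · -- i = 1
      subst h1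
      have hsplit : Finset.Icc 1 n = Finset.Icc 1 (n-1) ∪ Finset.Icc n n := by
        ext j; simp [Finset.mem_Icc]; omega
      have hdisj : Disjoint (Finset.Icc 1 (n-1)) (Finset.Icc n n) := by
        simp [Finset.disjoint_left, Finset.mem_Icc]; omega
      have hsum : α = (∑ j ∈ Finset.Icc 1 (n-1), d j) + d n := by
        rw [hα, hsplit, Finset.sum_union hdisj, Finset.Icc_self, Finset.sum_singleton]
      have h1 : (∑ j ∈ Finset.Icc 1 (n-1), d j) ≥ ∑ j ∈ Finset.Icc 1 (n-1), d 1 := by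
        apply Finset.sum_le_sum
        intro j hj
        simp only [Finset.mem_Icc] at hj
        exact hmono 1 j le_rfl hj.1 (by omega)
      rw [Finset.sum_const, Nat.card_Icc, nsmul_eq_mul] at h1
      have h2 : d 1 + 1 ≤ d n := hlt
      have : ((n - 1 + 1 - 1 : ℕ) : ℤ) = (n : ℤ) - 1 := by push_cast; omega
      rw [this] at h1
      push_cast
      nlinarith [hsum, h1, h2]
    · -- 2 ≤ i
      have hsplit : Finset.Icc 1 n = Finset.Icc 1 (i-1) ∪ Finset.Icc i n := by
        ext j; simp [Finset.mem_Icc]; omega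
      have hdisj : Disjoint (Finset.Icc 1 (i-1)) (Finset.Icc i n) := by
        simp [Finset.disjoint_left, Finset.mem_Icc]; omega
      have hsum : α = (∑ j ∈ Finset.Icc 1 (i-1), d j) + ∑ j ∈ Finset.Icc i n, d j := by
        rw [hα, hsplit, Finset.sum_union hdisj]
      have hl : (∑ j ∈ Finset.Icc 1 (i-1), (2:ℤ)) ≤ ∑ j ∈ Finset.Icc 1 (i-1), d j := by
        apply Finset.sum_le_sum
        intro j hj
        simp only [Finset.mem_Icc] at hj
        exact hd2 j hj.1 (by omega)
      have hr : (∑ j ∈ Finset.Icc i n, d i) ≤ ∑ j ∈ Finset.Icc i n, d j := by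
        apply Finset.sum_le_sum
        intro j hj
        simp only [Finset.mem_Icc] at hj
        exact hmono i j (by omega) hj.1 hj.2
      rw [Finset.sum_const, Nat.card_Icc, nsmul_eq_mul] at hl
      rw [Finset.sum_const, Nat.card_Icc, nsmul_eq_mul] at hr
      have c1 : ((i - 1 + 1 - 1 : ℕ) : ℤ) = (i : ℤ) - 1 := by push_cast [Nat.cast_sub]; omega
      have c2 : ((n + 1 - i : ℕ) : ℤ) = (n : ℤ) + 1 - (i : ℤ) := by omega
      rw [c1] at hl
      rw [c2] at hr
      have : (2:ℤ) ≤ (i:ℤ) := by exact_mod_cast h2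
      linarith
  have h0 : ∀ i ∈ Finset.Icc 1 n, (0:ℤ) ≤ ((n:ℤ)+1-(i:ℤ)) * d i := by
    intro i hi
    simp only [Finset.mem_Icc] at hi
    have := hd2 i hi.1 hi.2
    have : (i:ℤ) ≤ (n:ℤ) := by exact_mod_cast hi.2
    nlinarith [hd2 i hi.1 hi.2]
  have hprod := Finset.prod_le_prod h0 key
  rw [Finset.prod_mul_distrib] at hprod
  have hfacN : ∏ i ∈ Finset.Icc 1 n, (n + 1 - i) = n.factorial := by
    have h : ∏ i ∈ Finset.Icc 1 n, (n + 1 - i) = ∏ i ∈ Finset.Icc 1 n, i :=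
      Finset.prod_nbij' (fun a => n + 1 - a) (fun a => n + 1 - a)
        (fun a ha => by simp only [Finset.mem_Icc] at *; omega)
        (fun a ha => by simp only [Finset.mem_Icc] at *; omega)
        (fun a ha => by simp only [Finset.mem_Icc] at ha; show n + 1 - (n + 1 - a) = a; omega)
        (fun a ha => by simp only [Finset.mem_Icc] at ha; show n + 1 - (n + 1 - a) = a; omega)
        (fun a ha => rfl)
    rw [h, ← Finset.Ico_add_one_right_eq_Icc, Finset.prod_Ico_id_eq_factorial]
  have hfac : ∏ i ∈ Finset.Icc 1 n, ((n:ℤ)+1-(i:ℤ)) = (n.factorial : ℤ) := by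
    rw [← hfacN, Nat.cast_prod]
    apply Finset.prod_congr rfl
    intro i hi
    simp only [Finset.mem_Icc] at hi
    omega
  rw [hfac] at hprod
  exact hprod
end

section
/- If $n \geq 3$ and $\delta \geq 2$ is an integer, then $n! \cdot \delta^n \leq \alpha \cdot \left(\prod_{i=2}^{n-1}(\alpha - i)\right) \cdot (\alpha - 2n + 2)$, where $\alpha = n\delta$. -/
theorem stmt1 (n : ℕ) (hn : 3 ≤ n) (δ : ℤ) (hδ : 2 ≤ δ) :
    (n.factorial : ℤ) * δ ^ n ≤
      (n : ℤ) * δ * (∏ i ∈ Finset.Icc 2 (n - 1), ((n : ℤ) * δ - (i : ℤ))) *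
        ((n : ℤ) * δ - 2 * n + 2) := by
  have hδ0 : (0:ℤ) ≤ δ := by linarith
  have hn3 : (3:ℤ) ≤ (n:ℤ) := by exact_mod_cast hn
  -- step 1: termwise bound on the product
  have hprod1 : ∏ i ∈ Finset.Icc 2 (n-1), (((n:ℤ)+1-i)*δ)
      ≤ ∏ i ∈ Finset.Icc 2 (n-1), ((n:ℤ)*δ - i) := by
    apply Finset.prod_le_prod
    · intro i hi
      simp only [Finset.mem_Icc] at hi
      have h1 : (i:ℤ) ≤ (n:ℤ) - 1 := by omega
      exact mul_nonneg (by linarith) (by linarith)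
    · intro i hi
      simp only [Finset.mem_Icc] at hi
      have h1 : (i:ℤ) ≤ (n:ℤ) - 1 := by omega
      have h2 : (2:ℤ) ≤ (i:ℤ) := by exact_mod_cast hi.1
      nlinarith [mul_nonneg (sub_nonneg.2 h2) (by linarith : (0:ℤ) ≤ δ - 1)]
  -- step 2: compute the lower product
  have hcard : (Finset.Icc 2 (n-1)).card = n - 2 := by
    rw [Nat.card_Icc]; omega
  have hrefl : ∏ i ∈ Finset.Icc 2 (n-1), ((n:ℤ)+1-i)
      = ∏ i ∈ Finset.Icc 2 (n-1), (i:ℤ) := by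
    refine Finset.prod_nbij' (fun i => n+1-i) (fun i => n+1-i) ?_ ?_ ?_ ?_ ?_
    · intro a ha; simp only [Finset.mem_Icc] at *; omega
    · intro a ha; simp only [Finset.mem_Icc] at *; omega
    · intro a ha; simp only [Finset.mem_Icc] at *; omega
    · intro a ha; simp only [Finset.mem_Icc] at *; omega
    · intro a ha; simp only [Finset.mem_Icc] at ha
      have : ((n+1-a : ℕ) : ℤ) = (n:ℤ)+1-a := by
        have : a ≤ n + 1 := by omega
        push_cast [Nat.cast_sub this]; ring
      rw [this]
  have hfac : ∏ i ∈ Finset.Icc 2 (n-1), (i:ℤ) = ((n-1).factorial : ℤ) := by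
    rw [← Nat.cast_prod]
    congr 1
    have h1 : Finset.Ico 1 (n-1+1) = insert 1 (Finset.Icc 2 (n-1)) := by
      ext x; simp only [Finset.mem_Icc, Finset.mem_Ico, Finset.mem_insert]; omega
    have h2 := Finset.prod_Ico_id_eq_factorial (n-1)
    rw [h1, Finset.prod_insert (by simp)] at h2
    simpa using h2
  have hLHS : ∏ i ∈ Finset.Icc 2 (n-1), (((n:ℤ)+1-i)*δ)
      = ((n-1).factorial : ℤ) * δ ^ (n-2) := by
    rw [Finset.prod_mul_distrib, hrefl, hfac, Finset.prod_const, hcard]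
  rw [hLHS] at hprod1
  -- step 3: assemble
  have hδle : δ ≤ (n:ℤ)*δ - 2*n + 2 := by nlinarith
  have hBnn : (0:ℤ) ≤ ((n-1).factorial : ℤ) * δ ^ (n-2) := by positivity
  have hnd : (0:ℤ) ≤ (n:ℤ)*δ := by positivity
  have key : (n:ℤ)*δ * (((n-1).factorial : ℤ) * δ ^ (n-2)) * δ
      ≤ (n:ℤ)*δ * (∏ i ∈ Finset.Icc 2 (n-1), ((n:ℤ)*δ - i)) * ((n:ℤ)*δ - 2*n + 2) := by
    have hBnn2 : (0:ℤ) ≤ ∏ i ∈ Finset.Icc 2 (n-1), ((n:ℤ)*δ - i) := le_trans hBnn hprod1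
    have hlast : (0:ℤ) ≤ (n:ℤ)*δ - 2*n + 2 := by linarith
    gcongr (n:ℤ)*δ * ?_ * ?_
  refine le_trans (le_of_eq ?_) key
  have hfacn : (n.factorial : ℤ) = (n:ℤ) * ((n-1).factorial : ℤ) := by
    conv_lhs => rw [show n = (n-1)+1 from by omega, Nat.factorial_succ]
    push_cast
    have h : ((n-1:ℕ):ℤ) = (n:ℤ)-1 := by omega
    rw [h]; ring
  have hpow : δ ^ n = δ ^ (n-2) * δ * δ := by
    rw [← pow_succ, ← pow_succ]
    congr 1; omega
  rw [hfacn, hpow]; ring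
end

section
/- Let $n \geq 3$ and let $d_1 \leq d_2 \leq \cdots \leq d_n$ be integers with each $d_i \geq 2$. Let $d = \prod_{i=1}^n d_i$ and $\alpha = \sum_{i=1}^n d_i$. Then $n! \cdot d \leq (\alpha - 1)(\alpha - 2) \cdots (\alpha - n)$, i.e., $d \leq \binom{\alpha - 1}{n}$. -/
open Finset

lemma icc_prod_split (n : ℕ) (f : ℕ → ℤ) :
    ∏ i ∈ Finset.Icc 1 (n+1), f i = f 1 * ∏ i ∈ Finset.Icc 1 n, f (i+1) := by
  rw [← Finset.Ico_add_one_right_eq_Icc, ← Finset.Ico_add_one_right_eq_Icc, Finset.prod_Ico_eq_prod_range, Finset.prod_Ico_eq_prod_range]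
  simp only [Nat.add_sub_cancel, Nat.succ_sub_one]
  rw [Finset.prod_range_succ']
  rw [mul_comm]
  norm_num [Nat.add_assoc]

lemma icc_sum_split (n : ℕ) (f : ℕ → ℤ) :
    ∑ i ∈ Finset.Icc 1 (n+1), f i = f 1 + ∑ i ∈ Finset.Icc 1 n, f (i+1) := by
  rw [← Finset.Ico_add_one_right_eq_Icc, ← Finset.Ico_add_one_right_eq_Icc, Finset.sum_Ico_eq_sum_range, Finset.sum_Ico_eq_sum_range]
  simp only [Nat.add_sub_cancel, Nat.succ_sub_one]
  rw [Finset.sum_range_succ']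
  rw [add_comm]
  norm_num [Nat.add_assoc]

lemma icc_shift (n : ℕ) (β : ℤ) :
    (∏ i ∈ Finset.Icc 1 n, (β + 1 - (i:ℤ))) * (β - n) =
      β * ∏ i ∈ Finset.Icc 1 n, (β - (i:ℤ)) := by
  have h1 : ∏ i ∈ Finset.Icc 1 n, (β + 1 - (i:ℤ)) = ∏ i ∈ Finset.range n, (β - (i:ℤ)) := by
    rw [← Finset.Ico_add_one_right_eq_Icc, Finset.prod_Ico_eq_prod_range]
    simp only [Nat.add_sub_cancel, Nat.succ_sub_one]
    apply Finset.prod_congr rfl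
    intro i _
    push_cast
    ring
  have h2 : ∏ i ∈ Finset.Icc 1 n, (β - (i:ℤ)) = ∏ i ∈ Finset.range n, (β - 1 - (i:ℤ)) := by
    rw [← Finset.Ico_add_one_right_eq_Icc, Finset.prod_Ico_eq_prod_range]
    simp only [Nat.add_sub_cancel, Nat.succ_sub_one]
    apply Finset.prod_congr rfl
    intro i _
    push_cast
    ring
  rw [h1, h2, ← Finset.prod_range_succ (fun i => (β - (i:ℤ))) n, Finset.prod_range_succ']
  simp only [Nat.cast_zero, sub_zero, Nat.cast_add, Nat.cast_one]
  rw [mul_comm]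
  congr 1
  apply Finset.prod_congr rfl
  intro i _
  ring

lemma aux_main : ∀ n : ℕ, 3 ≤ n → ∀ d : ℕ → ℤ,
    (∀ i, 1 ≤ i → i ≤ n → 2 ≤ d i) →
    (∀ i j, 1 ≤ i → i ≤ j → j ≤ n → d i ≤ d j) →
    (n.factorial : ℤ) * ∏ i ∈ Finset.Icc 1 n, d i ≤
      ∏ i ∈ Finset.Icc 1 n, ((∑ j ∈ Finset.Icc 1 n, d j) - (i : ℤ)) := by
  intro n hn
  induction n, hn using Nat.le_induction with
  | base =>
    intro d hd2 hmono
    have ha : 2 ≤ d 1 := hd2 1 le_rfl (by norm_num)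
    have hab : d 1 ≤ d 2 := hmono 1 2 (by norm_num) (by norm_num) (by norm_num)
    have hbc : d 2 ≤ d 3 := hmono 2 3 (by norm_num) (by norm_num) (by norm_num)
    norm_num [show (3:ℕ) = 2 + 1 from rfl, show (2:ℕ) = 1 + 1 from rfl,
      Finset.prod_Icc_succ_top, Finset.sum_Icc_succ_top, Nat.factorial]
    set a := d 1; set b := d 2; set c := d 3
    nlinarith [mul_nonneg (mul_nonneg (sub_nonneg.2 ha) (sub_nonneg.2 hab)) (sub_nonneg.2 hbc),
      mul_nonneg (sub_nonneg.2 ha) (sub_nonneg.2 hab),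
      mul_nonneg (sub_nonneg.2 hab) (sub_nonneg.2 hbc),
      mul_nonneg (sub_nonneg.2 ha) (sub_nonneg.2 hbc), sq_nonneg (a-2), sq_nonneg (b-a),
      sq_nonneg (c-b),
      mul_nonneg (mul_nonneg (sub_nonneg.2 ha) (sub_nonneg.2 ha)) (sub_nonneg.2 hbc),
      mul_nonneg (mul_nonneg (sub_nonneg.2 ha) (sub_nonneg.2 ha)) (sub_nonneg.2 hab)]
  | succ n hn ih =>
    intro d hd2 hmono
    have hd1 : 2 ≤ d 1 := hd2 1 le_rfl (by omega)
    have IH := ih (fun i => d (i+1))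
      (fun i hi1 hin => hd2 (i+1) (by omega) (by omega))
      (fun i j hi1 hij hjn => hmono (i+1) (j+1) (by omega) (by omega) (by omega))
    set β : ℤ := ∑ j ∈ Finset.Icc 1 n, d (j+1) with hβ
    set P : ℤ := ∏ i ∈ Finset.Icc 1 n, d (i+1) with hP
    set B : ℤ := ∏ i ∈ Finset.Icc 1 n, (β - (i:ℤ)) with hB
    set A : ℤ := ∏ i ∈ Finset.Icc 1 n, (β + 1 - (i:ℤ)) with hA
    have hsum : ∑ j ∈ Finset.Icc 1 (n+1), d j = d 1 + β := icc_sum_split n d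
    -- lower bounds on β
    have hβn : (n : ℤ) * d 1 ≤ β := by
      calc (n : ℤ) * d 1 = ∑ _j ∈ Finset.Icc 1 n, d 1 := by
            rw [Finset.sum_const, Nat.card_Icc]; simp [nsmul_eq_mul]
        _ ≤ β := Finset.sum_le_sum (fun j hj => by
            simp only [Finset.mem_Icc] at hj
            exact hmono 1 (j+1) le_rfl (by omega) (by omega))
    have hβ2n : 2 * (n : ℤ) ≤ β := by
      calc 2 * (n : ℤ) = ∑ _j ∈ Finset.Icc 1 n, (2:ℤ) := by
            rw [Finset.sum_const, Nat.card_Icc]; simp [nsmul_eq_mul, mul_comm]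
        _ ≤ β := Finset.sum_le_sum (fun j hj => by
            simp only [Finset.mem_Icc] at hj
            exact hd2 (j+1) (by omega) (by omega))
    have hn3 : (3 : ℤ) ≤ (n : ℤ) := by exact_mod_cast hn
    -- positivity facts
    have hApos : 0 < A := Finset.prod_pos (fun i hi => by
      simp only [Finset.mem_Icc] at hi
      have : (i : ℤ) ≤ n := by exact_mod_cast hi.2
      linarith)
    have hBpos : 0 < B := Finset.prod_pos (fun i hi => by
      simp only [Finset.mem_Icc] at hi
      have : (i : ℤ) ≤ n := by exact_mod_cast hi.2
      linarith)
    have hPpos : 0 < P := Finset.prod_pos (fun i hi => by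
      simp only [Finset.mem_Icc] at hi
      have := hd2 (i+1) (by omega) (by omega)
      linarith)
    -- step A : termwise comparison
    have hstepA : A ≤ ∏ i ∈ Finset.Icc 1 n, ((d 1 + β) - ((i:ℤ)+1)) := by
      apply Finset.prod_le_prod
      · intro i hi
        simp only [Finset.mem_Icc] at hi
        have : (i : ℤ) ≤ n := by exact_mod_cast hi.2
        linarith
      · intro i hi
        linarith
    have hshift : A * (β - n) = β * B := icc_shift n β
    have hquad : ((n:ℤ)+1) * d 1 * (β - n) ≤ (d 1 + β - 1) * β := by
      nlinarith [mul_nonneg (sub_nonneg.2 hβn) (show (0:ℤ) ≤ β - 1 by linarith)]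
    -- assemble
    have hfac : ((n+1).factorial : ℤ) = ((n:ℤ)+1) * (n.factorial : ℤ) := by
      rw [Nat.factorial_succ]; push_cast; ring
    have hgoal' : ((n+1).factorial : ℤ) * (d 1 * P) * (β - n) ≤ (d 1 + β - 1) * A * (β - n) := by
      have e1 : (d 1 + β - 1) * A * (β - n) = ((d 1 + β - 1) * β) * B := by
        rw [mul_assoc, hshift]; ring
      rw [e1, hfac]
      have h5 : ((n:ℤ)+1) * d 1 * (β - n) * ((n.factorial : ℤ) * P)
          ≤ ((d 1 + β - 1) * β) * ((n.factorial : ℤ) * P) := by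
        apply mul_le_mul_of_nonneg_right hquad
        positivity
      have h6 : ((d 1 + β - 1) * β) * ((n.factorial : ℤ) * P) ≤ ((d 1 + β - 1) * β) * B := by
        apply mul_le_mul_of_nonneg_left IH
        nlinarith [hd1, hβ2n, hn3]
      calc ((n:ℤ)+1) * (n.factorial : ℤ) * (d 1 * P) * (β - n)
          = ((n:ℤ)+1) * d 1 * (β - n) * ((n.factorial : ℤ) * P) := by ring
        _ ≤ ((d 1 + β - 1) * β) * ((n.factorial : ℤ) * P) := h5
        _ ≤ ((d 1 + β - 1) * β) * B := h6
    have hβnpos : (0:ℤ) < β - n := by linarith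
    have hgoal2 : ((n+1).factorial : ℤ) * (d 1 * P) ≤ (d 1 + β - 1) * A :=
      le_of_mul_le_mul_right hgoal' hβnpos
    -- rewrite goal
    rw [icc_prod_split n d, hsum, icc_prod_split n (fun i => (d 1 + β) - (i:ℤ))]
    push_cast
    calc ((n+1).factorial : ℤ) * (d 1 * P) ≤ (d 1 + β - 1) * A := hgoal2
      _ ≤ (d 1 + β - 1) * ∏ i ∈ Finset.Icc 1 n, ((d 1 + β) - ((i:ℤ)+1)) := by
          apply mul_le_mul_of_nonneg_left hstepA
          linarith

theorem stmt4 (n : ℕ) (hn : 3 ≤ n) (d : ℕ → ℤ)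
    (hd2 : ∀ i, 1 ≤ i → i ≤ n → 2 ≤ d i)
    (hmono : ∀ i j, 1 ≤ i → i ≤ j → j ≤ n → d i ≤ d j) :
    (n.factorial : ℤ) * ∏ i ∈ Finset.Icc 1 n, d i ≤
      ∏ i ∈ Finset.Icc 1 n, ((∑ j ∈ Finset.Icc 1 n, d j) - (i : ℤ)) := by
  exact aux_main n hn d hd2 hmono
end

section
/- Let $n \geq 3$ and let $d_1 \leq d_2 \leq \cdots \leq d_n$ be integers with each $d_i \geq 2$. Let $d = \prod_{i=1}^n d_i$ and $\alpha = \sum_{i=1}^n d_i$. Then $n! \cdot d \leq \alpha(\alpha - 2)(\alpha - 4)(\alpha - 6) \cdots (\alpha - 2(n-1))$. -/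
theorem stmt5 (n : ℕ) (hn : 3 ≤ n) (d : ℕ → ℤ)
    (hd2 : ∀ i, 1 ≤ i → i ≤ n → 2 ≤ d i)
    (hmono : ∀ i j, 1 ≤ i → i ≤ j → j ≤ n → d i ≤ d j) :
    (n.factorial : ℤ) * ∏ i ∈ Finset.Icc 1 n, d i ≤
      ∏ k ∈ Finset.range n, ((∑ j ∈ Finset.Icc 1 n, d j) - 2 * (k : ℤ)) := by
  have key : ∀ k ∈ Finset.range n,
      ((n - k : ℕ) : ℤ) * d (k+1) ≤ (∑ j ∈ Finset.Icc 1 n, d j) - 2 * (k : ℤ) := by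
    intro k hk
    rw [Finset.mem_range] at hk
    have hsplit : (∑ j ∈ Finset.Ico 1 (k+1), d j) + ∑ j ∈ Finset.Ico (k+1) (n+1), d j
        = ∑ j ∈ Finset.Icc 1 n, d j := by
      rw [← Finset.Ico_add_one_right_eq_Icc]
      exact Finset.sum_Ico_consecutive d (by omega) (by omega)
    have h1 : (2 * k : ℤ) ≤ ∑ j ∈ Finset.Ico 1 (k+1), d j := by
      have := Finset.card_nsmul_le_sum (Finset.Ico 1 (k+1)) d 2
        (fun i hi => hd2 i (Finset.mem_Ico.mp hi).1
          (by have := (Finset.mem_Ico.mp hi).2; omega))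
      simpa [Nat.card_Ico, nsmul_eq_mul, mul_comm] using this
    have h2 : ((n - k : ℕ) : ℤ) * d (k+1) ≤ ∑ j ∈ Finset.Ico (k+1) (n+1), d j := by
      have := Finset.card_nsmul_le_sum (Finset.Ico (k+1) (n+1)) d (d (k+1))
        (fun i hi => hmono (k+1) i (by omega) (Finset.mem_Ico.mp hi).1
          (by have := (Finset.mem_Ico.mp hi).2; omega))
      simpa [Nat.card_Ico, nsmul_eq_mul] using this
    linarith
  have hpos : ∀ k ∈ Finset.range n, (0 : ℤ) ≤ ((n - k : ℕ) : ℤ) * d (k+1) := by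
    intro k hk
    rw [Finset.mem_range] at hk
    have : 2 ≤ d (k+1) := hd2 _ (by omega) (by omega)
    have : (0:ℤ) ≤ d (k+1) := by linarith
    positivity
  calc (n.factorial : ℤ) * ∏ i ∈ Finset.Icc 1 n, d i
      = ∏ k ∈ Finset.range n, (((n - k : ℕ) : ℤ) * d (k+1)) := by
        rw [Finset.prod_mul_distrib]
        congr 1
        · have h : ∏ k ∈ Finset.range n, (n - k) = n.factorial := by
            rw [show ∏ k ∈ Finset.range n, (n - k)
                = ∏ k ∈ Finset.range n, ((n - 1 - k) + 1) from
              Finset.prod_congr rfl (fun k hk => by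
                rw [Finset.mem_range] at hk; omega)]
            rw [Finset.prod_range_reflect (fun j => j + 1) n]
            exact Finset.prod_range_add_one_eq_factorial n
          exact_mod_cast h.symm
        · rw [← Finset.Ico_add_one_right_eq_Icc, Finset.prod_Ico_eq_prod_range]
          simp [add_comm]
    _ ≤ _ := Finset.prod_le_prod hpos key
end

section
/- Let $n \geq 5$ and let $d_1 \leq \cdots \leq d_n$ be integers with each $d_i \geq 2$ and $d_1 < d_n$. Let $\alpha = \sum_{i=1}^n d_i$ and $t = \alpha - d_n - n + 2$. Then $d_n(d_n + d_{n-1}) \leq (d_n - 1)(d_n + t)$. -/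
theorem stmt7 (n : ℕ) (hn : 5 ≤ n) (d : ℕ → ℤ)
    (hd2 : ∀ i, 1 ≤ i → i ≤ n → 2 ≤ d i)
    (hmono : ∀ i j, 1 ≤ i → i ≤ j → j ≤ n → d i ≤ d j)
    (hlt : d 1 < d n) :
    d n * (d n + d (n - 1)) ≤
      (d n - 1) * (d n + ((∑ i ∈ Finset.Icc 1 n, d i) - d n - n + 2)) := by
  have h1 : (∑ i ∈ Finset.Icc 1 n, d i)
      = (∑ i ∈ Finset.Icc 1 (n-2), d i) + d (n-1) + d n := by
    have e1 : n = (n-1) + 1 := by omega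
    have e2 : n - 1 = (n-2) + 1 := by omega
    rw [e1, Finset.sum_Icc_succ_top (by omega), ← e1, e2,
      Finset.sum_Icc_succ_top (by omega), ← e2]
  have h2 : (2 : ℤ) * (n - 2) ≤ ∑ i ∈ Finset.Icc 1 (n-2), d i := by
    have : ∀ i ∈ Finset.Icc 1 (n-2), (2:ℤ) ≤ d i := by
      intro i hi
      simp only [Finset.mem_Icc] at hi
      exact hd2 i hi.1 (by omega)
    have h := Finset.card_nsmul_le_sum _ _ _ this
    simp only [Nat.card_Icc, smul_eq_mul] at h
    have hc : ((n - 2 + 1 - 1 : ℕ) : ℤ) = (n : ℤ) - 2 := by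
      push_cast [Nat.cast_sub (by omega : 2 ≤ n)]; omega
    calc (2:ℤ) * (n - 2) = ((n - 2 + 1 - 1 : ℕ) : ℤ) * 2 := by rw [hc]; ring
    _ ≤ _ := h
  have hdn3 : 3 ≤ d n := by have := hd2 1 le_rfl (by omega); omega
  have hmle : d (n-1) ≤ d n := hmono (n-1) n (by omega) (by omega) le_rfl
  have hd2' : 2 ≤ d (n-1) := hd2 (n-1) (by omega) (by omega)
  have hn5 : (5 : ℤ) ≤ (n : ℤ) := by exact_mod_cast hn
  set S := ∑ i ∈ Finset.Icc 1 n, d i with hS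
  nlinarith [mul_nonneg (by linarith : (0:ℤ) ≤ d n - 3)
      (by linarith : (0:ℤ) ≤ S - d n - d (n-1) - (n:ℤ) + 1 - 2),
    mul_nonneg (by linarith : (0:ℤ) ≤ d n - 1)
      (by linarith : (0:ℤ) ≤ S - d n - d (n-1) - (n:ℤ) + 1 - 2)]
end

section
/- Let $n \geq 3$ and let $d_1 \leq \cdots \leq d_n$ be integers with each $d_i \geq 2$. Let $\alpha = \sum_{i=1}^n d_i$, $d = \prod_{i=1}^n d_i$, and let $t$ be an integer with $1 \leq t \leq d_n$. Then $\left(\prod_{i=1}^{n-1} \sum_{j=1}^i d_j\right)(\alpha - t) \leq n!(d - t)$. -/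
lemma prod_succ_factorial (m : ℕ) :
    ∏ i ∈ Finset.Icc 1 m, (i + 1) = (m + 1).factorial := by
  induction m with
  | zero => simp
  | succ k ih =>
    rw [Finset.prod_Icc_succ_top (Nat.le_add_left 1 k), ih, mul_comm, ← Nat.factorial_succ]

lemma prod_Icc_id_fact (m : ℕ) :
    ∏ i ∈ Finset.Icc 1 m, i = m.factorial := by
  induction m with
  | zero => simp
  | succ k ih =>
    rw [Finset.prod_Icc_succ_top (Nat.le_add_left 1 k), ih, mul_comm, ← Nat.factorial_succ]

theorem stmt8 (n : ℕ) (hn : 3 ≤ n) (d : ℕ → ℤ)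
    (hd2 : ∀ i, 1 ≤ i → i ≤ n → 2 ≤ d i)
    (hmono : ∀ i j, 1 ≤ i → i ≤ j → j ≤ n → d i ≤ d j)
    (t : ℤ) (ht1 : 1 ≤ t) (ht2 : t ≤ d n) :
    (∏ i ∈ Finset.Icc 1 (n - 1), ∑ j ∈ Finset.Icc 1 i, d j) *
        ((∑ i ∈ Finset.Icc 1 n, d i) - t) ≤
      (n.factorial : ℤ) * ((∏ i ∈ Finset.Icc 1 n, d i) - t) := by
  set S : ℕ → ℤ := fun i => ∑ j ∈ Finset.Icc 1 i, d j with hS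
  have hSpos : ∀ i, 1 ≤ i → i ≤ n → (i : ℤ) + 1 ≤ S i := by
    intro i hi1 hin
    have h2 : ∑ j ∈ Finset.Icc 1 i, (2 : ℤ) ≤ S i := by
      apply Finset.sum_le_sum
      intro j hj
      simp only [Finset.mem_Icc] at hj
      exact hd2 j hj.1 (le_trans hj.2 hin)
    simp only [Finset.sum_const, Nat.card_Icc, nsmul_eq_mul] at h2
    have hcard : ((i + 1 - 1 : ℕ) : ℤ) = i := by omega
    rw [hcard] at h2
    nlinarith [(Int.natCast_pos.mpr hi1 : (0:ℤ) < i)]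
  have hSle : ∀ i, 1 ≤ i → i ≤ n → S i ≤ (i : ℤ) * d i := by
    intro i hi1 hin
    have : S i ≤ ∑ j ∈ Finset.Icc 1 i, d i := by
      apply Finset.sum_le_sum
      intro j hj
      simp only [Finset.mem_Icc] at hj
      exact hmono j i hj.1 hj.2 hin
    simpa [Nat.card_Icc] using this
  have hn1 : 1 ≤ n - 1 := by omega
  -- n! ≤ P
  have hfacle : (n.factorial : ℤ) ≤ ∏ i ∈ Finset.Icc 1 (n - 1), S i := by
    calc (n.factorial : ℤ) = ((∏ i ∈ Finset.Icc 1 (n-1), (i + 1) : ℕ) : ℤ) := by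
          rw [prod_succ_factorial (n-1), show n - 1 + 1 = n from by omega]
      _ = ∏ i ∈ Finset.Icc 1 (n-1), ((i : ℤ) + 1) := by push_cast; rfl
      _ ≤ ∏ i ∈ Finset.Icc 1 (n-1), S i := by
          apply Finset.prod_le_prod
          · intro i hi; positivity
          · intro i hi
            simp only [Finset.mem_Icc] at hi
            exact hSpos i hi.1 (by omega)
  -- P * S n ≤ n! * d
  have hkey : (∏ i ∈ Finset.Icc 1 (n - 1), S i) * S n ≤
      (n.factorial : ℤ) * ∏ i ∈ Finset.Icc 1 n, d i := by
    have h1 : (∏ i ∈ Finset.Icc 1 (n - 1), S i) * S n = ∏ i ∈ Finset.Icc 1 n, S i := by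
      obtain ⟨m, rfl⟩ : ∃ m, n = m + 1 := ⟨n - 1, by omega⟩
      rw [Finset.prod_Icc_succ_top (by omega : 1 ≤ m + 1)]
      simp
    rw [h1]
    calc ∏ i ∈ Finset.Icc 1 n, S i ≤ ∏ i ∈ Finset.Icc 1 n, ((i : ℤ) * d i) := by
          apply Finset.prod_le_prod
          · intro i hi
            simp only [Finset.mem_Icc] at hi
            have h3 : (0:ℤ) < i := Int.natCast_pos.mpr hi.1
            linarith [hSpos i hi.1 hi.2]
          · intro i hi
            simp only [Finset.mem_Icc] at hi
            exact hSle i hi.1 hi.2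
      _ = (∏ i ∈ Finset.Icc 1 n, (i : ℤ)) * ∏ i ∈ Finset.Icc 1 n, d i :=
          Finset.prod_mul_distrib
      _ = (n.factorial : ℤ) * ∏ i ∈ Finset.Icc 1 n, d i := by
          congr 1
          rw [show (∏ i ∈ Finset.Icc 1 n, (i : ℤ)) = ((∏ i ∈ Finset.Icc 1 n, i : ℕ) : ℤ) by
            push_cast; rfl, prod_Icc_id_fact]
  have ht : (n.factorial : ℤ) * t ≤ (∏ i ∈ Finset.Icc 1 (n - 1), S i) * t :=
    mul_le_mul_of_nonneg_right hfacle (by linarith)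
  have hSn : (∑ i ∈ Finset.Icc 1 n, d i) = S n := rfl
  rw [hSn]
  nlinarith [hkey, ht]
end

section
/- Let $n \geq 3$ and $d_1 \leq \cdots \leq d_n$ be integers with each $d_i \geq 2$ and $d_1 < d_n$. Let $\alpha = \sum_{i=1}^n d_i$, $d = \prod_{i=1}^n d_i$, and suppose $t = d_l$ for some $l < n$. Then $\left(\prod_{i=1}^{n-1}\sum_{j=1}^i d_j\right)(\alpha - 1) \leq n!(d - d_l)$. -/
/-! Bound each partial sum `d₁ + ⋯ + dᵢ` by `i dᵢ`, so the left-hand product is at most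
`(n-1)! Q (α - 1)` with `Q = d₁ ⋯ d_{n-1}`; since `d₁ < dₙ`, `α - 1 ≤ n dₙ - 2`. This gives
`n! Q dₙ - 2 (n-1)! Q = n! d - 2 (n-1)! Q`, and the deficit `2Q` absorbs `n d_l` because every
factor of `Q` other than `d_l` is at least `2` and `n ≤ 2^(n-1)`. -/

open Finset Nat

section OrderedSemiring

variable {R : Type*} [CommSemiring R] [PartialOrder R] [IsOrderedRing R]

lemma sum_Icc_le_mul_of_monotoneOn {d : ℕ → R} {i : ℕ} (hd : MonotoneOn d (Set.Icc 1 i)) :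
    ∑ j ∈ Icc 1 i, d j ≤ i * d i := by
  rcases Nat.eq_zero_or_pos i with rfl | hi
  · simp
  calc ∑ j ∈ Icc 1 i, d j ≤ #(Icc 1 i) • d i :=
        sum_le_card_nsmul _ _ _ fun j hj =>
          hd (by simpa using hj) (Set.mem_Icc.2 ⟨hi, le_rfl⟩) (mem_Icc.1 hj).2
    _ = i * d i := by simp [nsmul_eq_mul]

lemma prod_sum_Icc_le_factorial_mul_prod {d : ℕ → R} {m : ℕ}
    (hd : MonotoneOn d (Set.Icc 1 m)) (hd0 : ∀ i ∈ Icc 1 m, 0 ≤ d i) :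
    ∏ i ∈ Icc 1 m, ∑ j ∈ Icc 1 i, d j ≤ m ! * ∏ i ∈ Icc 1 m, d i := by
  have hfact : ∏ i ∈ Icc 1 m, (i : R) = m ! := by
    rw [← Nat.cast_prod, ← Ico_add_one_right_eq_Icc, prod_Ico_id_eq_factorial]
  calc ∏ i ∈ Icc 1 m, ∑ j ∈ Icc 1 i, d j ≤ ∏ i ∈ Icc 1 m, ((i : R) * d i) :=
        prod_le_prod
          (fun i hi => sum_nonneg fun j hj =>
            hd0 j (mem_Icc.2 ⟨(mem_Icc.1 hj).1, (mem_Icc.1 hj).2.trans (mem_Icc.1 hi).2⟩))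
          (fun i hi => sum_Icc_le_mul_of_monotoneOn
            (hd.mono (Set.Icc_subset_Icc_right (mem_Icc.1 hi).2)))
    _ = m ! * ∏ i ∈ Icc 1 m, d i := by rw [prod_mul_distrib, hfact]

lemma card_add_one_mul_le_two_mul_prod {ι : Type*} [DecidableEq ι] {s : Finset ι} {d : ι → R}
    {l : ι} (hl : l ∈ s) (hd : ∀ i ∈ s, 2 ≤ d i) :
    (#s + 1 : R) * d l ≤ 2 * ∏ i ∈ s, d i := by
  have hdl : 0 ≤ d l := zero_le_two.trans (hd l hl)
  have hcard : #s = #(s.erase l) + 1 := (card_erase_add_one hl).symm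
  have hpow : 2 ^ #(s.erase l) ≤ ∏ i ∈ s.erase l, d i := by
    rw [← prod_const]
    exact prod_le_prod (fun _ _ => zero_le_two) fun i hi => hd i (mem_of_mem_erase hi)
  have hcast : (#s + 1 : R) ≤ 2 ^ #s := by
    simpa using Nat.mono_cast (α := R) (#s).lt_two_pow_self
  calc (#s + 1 : R) * d l ≤ 2 ^ #s * d l := mul_le_mul_of_nonneg_right hcast hdl
    _ = 2 * (d l * 2 ^ #(s.erase l)) := by rw [hcard, pow_succ]; ring
    _ ≤ 2 * (d l * ∏ i ∈ s.erase l, d i) :=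
      mul_le_mul_of_nonneg_left (mul_le_mul_of_nonneg_left hpow hdl) zero_le_two
    _ = 2 * ∏ i ∈ s, d i := by rw [mul_prod_erase _ _ hl]

lemma sum_Icc_lt_mul_of_monotoneOn [IsOrderedCancelAddMonoid R] {d : ℕ → R} {n : ℕ}
    (hn : 1 ≤ n) (hd : MonotoneOn d (Set.Icc 1 n)) (hlt : d 1 < d n) :
    ∑ i ∈ Icc 1 n, d i < n * d n := by
  calc ∑ i ∈ Icc 1 n, d i < ∑ _i ∈ Icc 1 n, d n :=
        sum_lt_sum (fun i hi => hd (by simpa using hi) (Set.mem_Icc.2 ⟨hn, le_rfl⟩) (mem_Icc.1 hi).2)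
          ⟨1, mem_Icc.2 ⟨le_rfl, hn⟩, hlt⟩
    _ = n * d n := by simp [nsmul_eq_mul]

end OrderedSemiring

theorem stmt9_general (n : ℕ) (d : ℕ → ℤ)
    (hd2 : ∀ i, 1 ≤ i → i ≤ n → 2 ≤ d i)
    (hmono : ∀ i j, 1 ≤ i → i ≤ j → j ≤ n → d i ≤ d j)
    (hlt : d 1 < d n) (l : ℕ) (hl1 : 1 ≤ l) (hln : l < n) :
    (∏ i ∈ Finset.Icc 1 (n - 1), ∑ j ∈ Finset.Icc 1 i, d j) *
        ((∑ i ∈ Finset.Icc 1 n, d i) - 1) ≤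
      (n.factorial : ℤ) * ((∏ i ∈ Finset.Icc 1 n, d i) - d l) := by
  obtain ⟨m, rfl⟩ : ∃ m, n = m + 1 := ⟨n - 1, by omega⟩
  have hmon : MonotoneOn d (Set.Icc 1 (m + 1)) := fun i hi j hj hij => hmono i j hi.1 hij hj.2
  have htwo : ∀ i ∈ Icc 1 m, 2 ≤ d i := fun i hi => hd2 i (mem_Icc.1 hi).1 ((mem_Icc.1 hi).2.trans m.le_succ)
  have hP := prod_sum_Icc_le_factorial_mul_prod (hmon.mono (Set.Icc_subset_Icc_right m.le_succ))
    fun i hi => zero_le_two.trans (htwo i hi)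
  have hα := sum_Icc_lt_mul_of_monotoneOn (by omega) hmon hlt
  have hα1 : d 1 ≤ ∑ i ∈ Icc 1 (m + 1), d i :=
    single_le_sum (fun i hi => zero_le_two.trans (hd2 i (mem_Icc.1 hi).1 (mem_Icc.1 hi).2))
      (mem_Icc.2 ⟨le_rfl, by omega⟩)
  have hl := card_add_one_mul_le_two_mul_prod (mem_Icc.2 ⟨hl1, by omega⟩) htwo
  rw [Nat.card_Icc, Nat.add_sub_cancel] at hl
  rw [Nat.add_sub_cancel, prod_Icc_succ_top (by omega), Nat.factorial_succ]
  push_cast at hα ⊢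
  have hd1 := hd2 1 le_rfl (by omega)
  have hQ : 0 ≤ ∏ i ∈ Icc 1 m, d i := prod_nonneg fun i hi => zero_le_two.trans (htwo i hi)
  calc _ ≤ (m ! * ∏ i ∈ Icc 1 m, d i) * ((m + 1) * d (m + 1) - 2) :=
        mul_le_mul hP (by omega) (by omega) (by positivity)
    _ ≤ _ := by linear_combination (m ! : ℤ) * hl

theorem stmt9 (n : ℕ) (hn : 3 ≤ n) (d : ℕ → ℤ)
    (hd2 : ∀ i, 1 ≤ i → i ≤ n → 2 ≤ d i)
    (hmono : ∀ i j, 1 ≤ i → i ≤ j → j ≤ n → d i ≤ d j)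
    (hlt : d 1 < d n) (l : ℕ) (hl1 : 1 ≤ l) (hln : l < n) :
    (∏ i ∈ Finset.Icc 1 (n - 1), ∑ j ∈ Finset.Icc 1 i, d j) *
        ((∑ i ∈ Finset.Icc 1 n, d i) - 1) ≤
      (n.factorial : ℤ) * ((∏ i ∈ Finset.Icc 1 n, d i) - d l) :=
  stmt9_general n d hd2 hmono hlt l hl1 hln
end

section
/- Let $n \geq 3$ and $d_1 \leq \cdots \leq d_n$ be integers with each $d_i \geq 2$. Let $\alpha = \sum_{i=1}^n d_i$ and $d = \prod_{i=1}^n d_i$. Then $(\alpha - 1)(\alpha - d_n - 1) \prod_{i=1}^{n-2} \sum_{j=1}^{i} d_j \leq n!(d - d_n)$. -/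
open Finset

private lemma sumA (n : ℕ) (d : ℕ → ℤ)
    (hmono : ∀ i j, 1 ≤ i → i ≤ j → j ≤ n → d i ≤ d j)
    (i : ℕ) (hin : i ≤ n) :
    ∑ j ∈ Icc 1 i, d j ≤ (i : ℤ) * d i := by
  calc ∑ j ∈ Icc 1 i, d j ≤ ∑ j ∈ Icc 1 i, d i :=
        Finset.sum_le_sum fun j hj => by
          rw [Finset.mem_Icc] at hj
          exact hmono j i hj.1 hj.2 hin
    _ = (i : ℤ) * d i := by
        rw [Finset.sum_const, Nat.card_Icc]
        simp [nsmul_eq_mul]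

private lemma sumPos (n : ℕ) (d : ℕ → ℤ)
    (hd2 : ∀ i, 1 ≤ i → i ≤ n → 2 ≤ d i)
    (i : ℕ) (hin : i ≤ n) :
    (i : ℤ) ≤ ∑ j ∈ Icc 1 i, d j := by
  calc (i : ℤ) = ∑ j ∈ Icc 1 i, (1 : ℤ) := by simp
    _ ≤ ∑ j ∈ Icc 1 i, d j := Finset.sum_le_sum fun j hj => by
        rw [Finset.mem_Icc] at hj
        linarith [hd2 j hj.1 (hj.2.trans hin)]

private lemma prodPos (n : ℕ) (d : ℕ → ℤ)
    (hd2 : ∀ i, 1 ≤ i → i ≤ n → 2 ≤ d i)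
    (m : ℕ) (hm : m ≤ n) :
    (1 : ℤ) ≤ ∏ i ∈ Icc 1 m, d i := by
  calc (1:ℤ) = ∏ i ∈ Icc 1 m, 1 := by simp
    _ ≤ ∏ i ∈ Icc 1 m, d i := by
        apply Finset.prod_le_prod (fun i hi => by norm_num)
        intro i hi
        rw [Finset.mem_Icc] at hi
        linarith [hd2 i hi.1 (hi.2.trans hm)]

private lemma prodSnonneg (n : ℕ) (d : ℕ → ℤ)
    (hd2 : ∀ i, 1 ≤ i → i ≤ n → 2 ≤ d i)
    (m : ℕ) (hm : m ≤ n) :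
    (0 : ℤ) ≤ ∏ i ∈ Icc 1 m, ∑ j ∈ Icc 1 i, d j := by
  apply Finset.prod_nonneg
  intro i hi
  rw [Finset.mem_Icc] at hi
  have := sumPos n d hd2 i (hi.2.trans hm)
  have : (0:ℤ) ≤ (i:ℤ) := Int.natCast_nonneg i
  linarith [sumPos n d hd2 i (hi.2.trans hm)]

private lemma prodS (n : ℕ) (d : ℕ → ℤ)
    (hd2 : ∀ i, 1 ≤ i → i ≤ n → 2 ≤ d i)
    (hmono : ∀ i j, 1 ≤ i → i ≤ j → j ≤ n → d i ≤ d j)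
    (m : ℕ) (hm : m ≤ n) :
    ∏ i ∈ Icc 1 m, (∑ j ∈ Icc 1 i, d j) ≤ (m.factorial : ℤ) * ∏ i ∈ Icc 1 m, d i := by
  calc ∏ i ∈ Icc 1 m, (∑ j ∈ Icc 1 i, d j)
      ≤ ∏ i ∈ Icc 1 m, ((i:ℤ) * d i) := by
        apply Finset.prod_le_prod
        · intro i hi
          rw [Finset.mem_Icc] at hi
          have h1 := sumPos n d hd2 i (hi.2.trans hm)
          have h2 : (0:ℤ) ≤ (i:ℤ) := Int.natCast_nonneg i
          linarith
        · intro i hi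
          rw [Finset.mem_Icc] at hi
          exact sumA n d hmono i (hi.2.trans hm)
    _ = (∏ i ∈ Icc 1 m, (i:ℤ)) * ∏ i ∈ Icc 1 m, d i := Finset.prod_mul_distrib
    _ = (m.factorial : ℤ) * ∏ i ∈ Icc 1 m, d i := by
        rw [← Nat.cast_prod, ← Finset.Ico_add_one_right_eq_Icc, Finset.prod_Ico_id_eq_factorial]

private lemma key (n : ℕ) (d : ℕ → ℤ)
    (hd2 : ∀ i, 1 ≤ i → i ≤ n → 2 ≤ d i)
    (hmono : ∀ i j, 1 ≤ i → i ≤ j → j ≤ n → d i ≤ d j) :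
    ∀ k, k + 1 ≤ n →
      ((∑ j ∈ Icc 1 (k+1), d j) - 1) * ∏ i ∈ Icc 1 k, (∑ j ∈ Icc 1 i, d j)
        ≤ ((k+1).factorial : ℤ) * ((∏ i ∈ Icc 1 (k+1), d i) - 1) := by
  intro k
  induction k with
  | zero => intro h; simp
  | succ k ih =>
    intro h
    have hk1 : k + 1 ≤ n := by omega
    have ih' := ih hk1
    rw [Finset.sum_Icc_succ_top (by omega : 1 ≤ k+1+1),
        Finset.prod_Icc_succ_top (by omega : 1 ≤ k+1+1),
        Finset.prod_Icc_succ_top (by omega : 1 ≤ k+1)]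
    set S := ∑ j ∈ Icc 1 (k+1), d j with hS
    set Pr := ∏ i ∈ Icc 1 (k+1), d i with hPr
    set Q := ∏ i ∈ Icc 1 k, (∑ j ∈ Icc 1 i, d j) with hQ
    set dk := d (k+1+1) with hdk
    set F : ℤ := ((k+1).factorial : ℤ) with hF
    have hdk2 : 2 ≤ dk := hd2 (k+1+1) (by omega) h
    have hP1 : (1:ℤ) ≤ Pr := prodPos n d hd2 (k+1) hk1
    have hS0 : (0:ℤ) ≤ S := by
      have := sumPos n d hd2 (k+1) hk1
      have h2 : (0:ℤ) ≤ ((k+1:ℕ):ℤ) := Int.natCast_nonneg _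
      linarith
    have hQ0 : (0:ℤ) ≤ Q := prodSnonneg n d hd2 k (by omega)
    have hQS : Q * S ≤ F * Pr := by
      have := prodS n d hd2 hmono (k+1) hk1
      rw [Finset.prod_Icc_succ_top (by omega : 1 ≤ k+1)] at this
      exact this
    have hSd : S ≤ ((k+1:ℕ):ℤ) * dk := by
      have h1 := sumA n d hmono (k+1) hk1
      have h2 : d (k+1) ≤ dk := hmono (k+1) (k+1+1) (by omega) (by omega) h
      have h3 : (0:ℤ) ≤ ((k+1:ℕ):ℤ) := Int.natCast_nonneg _
      nlinarith
    have hF1 : (1:ℤ) ≤ F := by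
      rw [hF]
      exact_mod_cast Nat.one_le_iff_ne_zero.mpr (k+1).factorial_ne_zero
    have hfac : (((k+1+1).factorial : ℕ) : ℤ) = ((k:ℤ)+2) * F := by
      rw [hF, Nat.factorial_succ]
      push_cast
      ring
    rw [hfac]
    have hcast : ((k+1:ℕ):ℤ) = (k:ℤ)+1 := by push_cast; ring
    rw [hcast] at hSd
    calc (S + dk - 1) * (Q * S)
        = ((S - 1) * Q) * S + dk * (Q * S) := by ring
      _ ≤ (F * (Pr - 1)) * S + dk * (F * Pr) := by
          have h1 := mul_le_mul_of_nonneg_right ih' hS0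
          have h2 := mul_le_mul_of_nonneg_left hQS (by linarith : (0:ℤ) ≤ dk)
          linarith
      _ ≤ (F * (Pr - 1)) * (((k:ℤ)+1) * dk) + dk * (F * Pr) := by
          have hfp : (0:ℤ) ≤ F * (Pr - 1) := by nlinarith
          nlinarith
      _ ≤ ((k:ℤ)+2) * F * (Pr * dk - 1) := by
          have hgap : (0:ℤ) ≤ F * (((k:ℤ)+1) * dk - ((k:ℤ)+2)) := by
            apply mul_nonneg (by linarith)
            have hk0 : (0:ℤ) ≤ (k:ℤ) := Int.natCast_nonneg k
            nlinarith
          nlinarith [hgap]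

theorem stmt10 (n : ℕ) (hn : 3 ≤ n) (d : ℕ → ℤ)
    (hd2 : ∀ i, 1 ≤ i → i ≤ n → 2 ≤ d i)
    (hmono : ∀ i j, 1 ≤ i → i ≤ j → j ≤ n → d i ≤ d j) :
    ((∑ i ∈ Finset.Icc 1 n, d i) - 1) * ((∑ i ∈ Finset.Icc 1 n, d i) - d n - 1) *
        ∏ i ∈ Finset.Icc 1 (n - 2), ∑ j ∈ Finset.Icc 1 i, d j ≤
      (n.factorial : ℤ) * ((∏ i ∈ Finset.Icc 1 n, d i) - d n) := by
  obtain ⟨m, rfl⟩ : ∃ m, n = m + 3 := ⟨n - 3, by omega⟩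
  have hSn : ∑ i ∈ Icc 1 (m+3), d i = (∑ i ∈ Icc 1 (m+2), d i) + d (m+3) :=
    Finset.sum_Icc_succ_top (by omega) d
  have hPn : ∏ i ∈ Icc 1 (m+3), d i = (∏ i ∈ Icc 1 (m+2), d i) * d (m+3) :=
    Finset.prod_Icc_succ_top (by omega) d
  have hred : m + 3 - 2 = m + 1 := by omega
  rw [hSn, hPn, hred]
  set S' := ∑ i ∈ Icc 1 (m+2), d i with hS'
  set P' := ∏ i ∈ Icc 1 (m+2), d i with hP'
  set Q := ∏ i ∈ Icc 1 (m+1), (∑ j ∈ Icc 1 i, d j) with hQ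
  set dn := d (m+3) with hdn
  have hkey := key (m+3) d hd2 hmono (m+1) (by omega)
  have hdn2 : 2 ≤ dn := hd2 (m+3) (by omega) (by omega)
  have hS'1 : (1:ℤ) ≤ S' := by
    have := sumPos (m+3) d hd2 (m+2) (by omega)
    have h2 : (1:ℤ) ≤ ((m+2:ℕ):ℤ) := by push_cast; omega
    linarith
  have hQ0 : (0:ℤ) ≤ Q := prodSnonneg (m+3) d hd2 (m+1) (by omega)
  have hSd : S' + dn ≤ ((m:ℤ)+3) * dn := by
    have h1 := sumA (m+3) d hmono (m+3) (le_refl _)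
    rw [hSn] at h1
    have : ((m+3:ℕ):ℤ) = (m:ℤ)+3 := by push_cast; ring
    rw [this] at h1
    exact h1
  have hfac : (((m+3).factorial : ℕ) : ℤ) = ((m:ℤ)+3) * ((m+2).factorial : ℤ) := by
    rw [show m + 3 = (m+2)+1 by ring, Nat.factorial_succ]
    push_cast
    ring
  rw [hfac]
  have hX0 : (0:ℤ) ≤ (S' - 1) * Q := mul_nonneg (by linarith) hQ0
  calc (S' + dn - 1) * (S' + dn - dn - 1) * Q
      = (S' + dn - 1) * ((S' - 1) * Q) := by ring
    _ ≤ (((m:ℤ)+3) * dn) * ((S' - 1) * Q) := by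
        apply mul_le_mul_of_nonneg_right _ hX0
        linarith
    _ ≤ (((m:ℤ)+3) * dn) * (((m+2).factorial : ℤ) * (P' - 1)) := by
        apply mul_le_mul_of_nonneg_left hkey
        nlinarith
    _ = ((m:ℤ)+3) * ((m+2).factorial : ℤ) * (P' * dn - dn) := by ring
end

section
/- Let $n \geq 4$ and $d_1 \leq \cdots \leq d_n$ be integers with each $d_i \geq 2$. Let $\alpha = \sum_{i=1}^n d_i$ and $d = \prod_{i=1}^n d_i$. Then $n!(d - 3) \leq (\alpha - n)(\alpha - n - 1) \prod_{i=1}^{n-2}(\alpha - i)$. -/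
theorem lemA : ∀ (n : ℕ) (d : ℕ → ℤ), (∀ i, i < n → 2 ≤ d i) →
    (∀ i j, i ≤ j → j < n → d i ≤ d j) →
    (n.factorial : ℤ) * ∏ i ∈ Finset.range n, d i ≤
      ∏ j ∈ Finset.range n, ((∑ i ∈ Finset.range n, d i) - 2 * j) := by
  intro n
  induction n with
  | zero => simp
  | succ n ih =>
    intro d h2 hmono
    set S : ℤ := ∑ i ∈ Finset.range (n+1), d i with hSdef
    have h2e : ∀ i, i < n → 2 ≤ d (i+1) := fun i hi => h2 (i+1) (by omega)
    have key := ih (fun i => d (i+1)) h2e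
      (fun i j hij hj => hmono (i+1) (j+1) (by omega) (by omega))
    have hSe : ∑ i ∈ Finset.range n, d (i+1) = S - d 0 := by
      rw [hSdef, Finset.sum_range_succ']; ring
    rw [hSe] at key
    have hd0 : 2 ≤ d 0 := h2 0 (by omega)
    have hSe2 : 2 * (n:ℤ) ≤ S - d 0 := by
      calc (2:ℤ) * n = ∑ i ∈ Finset.range n, (2:ℤ) := by simp [mul_comm]
        _ ≤ ∑ i ∈ Finset.range n, d (i+1) := Finset.sum_le_sum (fun i hi => h2e i (Finset.mem_range.mp hi))
        _ = S - d 0 := hSe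
    have hpos : ∀ j ∈ Finset.range n, (0:ℤ) ≤ S - d 0 - 2 * j := by
      intro j hj
      have : (j:ℤ) < n := by exact_mod_cast Finset.mem_range.mp hj
      linarith
    have step1 : ∏ j ∈ Finset.range n, (S - d 0 - 2 * j) ≤
        ∏ j ∈ Finset.range n, (S - 2 * ((j:ℤ)+1)) := by
      apply Finset.prod_le_prod hpos
      intro j hj; linarith
    have hcard : ((n:ℤ)+1) * d 0 ≤ S := by
      have := Finset.card_nsmul_le_sum (Finset.range (n+1)) d (d 0)
        (fun i hi => hmono 0 i (Nat.zero_le i) (Finset.mem_range.mp hi))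
      simpa [nsmul_eq_mul, add_comm, add_mul] using this
    have hprod_nonneg : (0:ℤ) ≤ ∏ j ∈ Finset.range n, (S - d 0 - 2 * j) :=
      Finset.prod_nonneg hpos
    have hS0 : (0:ℤ) ≤ S := by
      have : (0:ℤ) ≤ (n:ℤ) := Int.natCast_nonneg n
      linarith
    calc ((n+1).factorial : ℤ) * ∏ i ∈ Finset.range (n+1), d i
        = ((n:ℤ)+1) * d 0 * ((n.factorial : ℤ) * ∏ i ∈ Finset.range n, d (i+1)) := by
          rw [Finset.prod_range_succ', Nat.factorial_succ]; push_cast; ring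
      _ ≤ ((n:ℤ)+1) * d 0 * ∏ j ∈ Finset.range n, (S - d 0 - 2 * j) := by
          apply mul_le_mul_of_nonneg_left key
          positivity
      _ ≤ S * ∏ j ∈ Finset.range n, (S - 2 * ((j:ℤ)+1)) :=
          mul_le_mul hcard step1 hprod_nonneg hS0
      _ = ∏ j ∈ Finset.range (n+1), (S - 2 * j) := by
          rw [Finset.prod_range_succ']; push_cast; ring

theorem lemB (k : ℕ) (A : ℤ) (hA : 2*((k:ℤ)+4) ≤ A) :
    ∏ j ∈ Finset.range (k+4), (A - 2*(j:ℤ)) ≤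
      (A-((k:ℤ)+4))*(A-((k:ℤ)+4)-1) * ∏ j ∈ Finset.range (k+2), (A-(1+(j:ℤ))) := by
  have hk : (0:ℤ) ≤ (k:ℤ) := Int.natCast_nonneg k
  have hterm : ∀ j ∈ Finset.range (k+1), (0:ℤ) ≤ A - 2*((j:ℤ)+1) := by
    intro j hj
    have : (j:ℤ) < k+1 := by exact_mod_cast Finset.mem_range.mp hj
    linarith
  have h1 : ∏ j ∈ Finset.range (k+1), (A - 2*((j:ℤ)+1)) ≤
      ∏ j ∈ Finset.range (k+1), (A - ((j:ℤ)+2)) := by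
    apply Finset.prod_le_prod hterm
    intro j hj
    have : (0:ℤ) ≤ (j:ℤ) := Int.natCast_nonneg j
    linarith
  have hP2 : (0:ℤ) ≤ ∏ j ∈ Finset.range (k+1), (A - ((j:ℤ)+2)) := by
    apply Finset.prod_nonneg
    intro j hj
    have : (j:ℤ) < k+1 := by exact_mod_cast Finset.mem_range.mp hj
    linarith
  have h12 : (∏ j ∈ Finset.range (k+1), (A - 2*((j:ℤ)+1))) * (A - 2*((k:ℤ)+2)) ≤
      (∏ j ∈ Finset.range (k+1), (A - ((j:ℤ)+2))) * (A - ((k:ℤ)+4)) :=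
    mul_le_mul h1 (by linarith) (by linarith) hP2
  have h3 : A * (A - 2*((k:ℤ)+3)) ≤ (A-1) * (A-((k:ℤ)+4)-1) := by nlinarith
  have hfin : ((∏ j ∈ Finset.range (k+1), (A - 2*((j:ℤ)+1))) * (A - 2*((k:ℤ)+2))) *
      (A * (A - 2*((k:ℤ)+3))) ≤
      ((∏ j ∈ Finset.range (k+1), (A - ((j:ℤ)+2))) * (A - ((k:ℤ)+4))) *
      ((A-1) * (A-((k:ℤ)+4)-1)) := by
    apply mul_le_mul h12 h3
    · have : (0:ℤ) ≤ ∏ j ∈ Finset.range (k+1), (A - 2*((j:ℤ)+1)) :=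
        Finset.prod_nonneg hterm
      nlinarith
    · exact mul_nonneg hP2 (by linarith)
  calc ∏ j ∈ Finset.range (k+4), (A - 2*(j:ℤ))
      = ((∏ j ∈ Finset.range (k+1), (A - 2*((j:ℤ)+1))) * (A - 2*((k:ℤ)+2))) *
        (A * (A - 2*((k:ℤ)+3))) := by
        rw [Finset.prod_range_succ, Finset.prod_range_succ, Finset.prod_range_succ']
        push_cast; ring
    _ ≤ ((∏ j ∈ Finset.range (k+1), (A - ((j:ℤ)+2))) * (A - ((k:ℤ)+4))) *
        ((A-1) * (A-((k:ℤ)+4)-1)) := hfin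
    _ = (A-((k:ℤ)+4))*(A-((k:ℤ)+4)-1) * ∏ j ∈ Finset.range (k+2), (A-(1+(j:ℤ))) := by
        have hsplit : ∏ j ∈ Finset.range (k+2), (A-(1+(j:ℤ))) =
            (∏ j ∈ Finset.range (k+1), (A-((j:ℤ)+2))) * (A-1) := by
          have heq : ∏ j ∈ Finset.range (k+1), (A-(1+((j+1:ℕ):ℤ))) =
              ∏ j ∈ Finset.range (k+1), (A-((j:ℤ)+2)) :=
            Finset.prod_congr rfl (fun j _ => by push_cast; ring)
          rw [Finset.prod_range_succ', heq]
          norm_num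
        rw [hsplit]; ring

theorem stmt12 (n : ℕ) (hn : 4 ≤ n) (d : ℕ → ℤ)
    (hd2 : ∀ i, 1 ≤ i → i ≤ n → 2 ≤ d i)
    (hmono : ∀ i j, 1 ≤ i → i ≤ j → j ≤ n → d i ≤ d j) :
    (n.factorial : ℤ) * ((∏ i ∈ Finset.Icc 1 n, d i) - 3) ≤
      ((∑ i ∈ Finset.Icc 1 n, d i) - n) * ((∑ i ∈ Finset.Icc 1 n, d i) - n - 1) *
        ∏ i ∈ Finset.Icc 1 (n - 2), ((∑ j ∈ Finset.Icc 1 n, d j) - (i : ℤ)) := by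
  obtain ⟨k, rfl⟩ : ∃ k, n = k + 4 := ⟨n - 4, by omega⟩
  have hIcc : (Finset.Icc 1 (k+4)) = Finset.Ico 1 (k+4+1) := by
    rw [Finset.Ico_add_one_right_eq_Icc]
  have hIcc2 : (Finset.Icc 1 (k+4-2)) = Finset.Ico 1 (k+2+1) := by
    rw [Finset.Ico_add_one_right_eq_Icc]; congr 1
  have hconvP : ∏ i ∈ Finset.Icc 1 (k+4), d i = ∏ i ∈ Finset.range (k+4), d (1+i) := by
    rw [hIcc, Finset.prod_Ico_eq_prod_range]; norm_num
  have hconvS : ∑ i ∈ Finset.Icc 1 (k+4), d i = ∑ i ∈ Finset.range (k+4), d (1+i) := by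
    rw [hIcc, Finset.sum_Ico_eq_sum_range]; norm_num
  set A : ℤ := ∑ i ∈ Finset.range (k+4), d (1+i) with hAdef
  have h2' : ∀ i, i < k+4 → 2 ≤ d (1+i) := fun i hi => hd2 (1+i) (by omega) (by omega)
  have hA : 2*((k:ℤ)+4) ≤ A := by
    calc (2:ℤ)*((k:ℤ)+4) = ∑ _i ∈ Finset.range (k+4), (2:ℤ) := by push_cast; simp [mul_comm]
      _ ≤ A := Finset.sum_le_sum (fun i hi => h2' i (Finset.mem_range.mp hi))
  have keyA := lemA (k+4) (fun i => d (1+i)) h2'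
    (fun i j hij hj => hmono (1+i) (1+j) (by omega) (by omega) (by omega))
  rw [← hAdef] at keyA
  have keyB := lemB k A hA
  have hconvP2 : ∏ i ∈ Finset.Icc 1 (k+4-2), ((∑ j ∈ Finset.Icc 1 (k+4), d j) - (i : ℤ)) =
      ∏ j ∈ Finset.range (k+2), (A - (1+(j:ℤ))) := by
    rw [hconvS, hIcc2, Finset.prod_Ico_eq_prod_range]
    exact Finset.prod_congr (by norm_num) (fun j _ => by push_cast; ring)
  have hfact0 : (0:ℤ) ≤ ((k+4).factorial : ℤ) := by positivity
  calc ((k+4).factorial : ℤ) * ((∏ i ∈ Finset.Icc 1 (k+4), d i) - 3)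
      ≤ ((k+4).factorial : ℤ) * ∏ i ∈ Finset.Icc 1 (k+4), d i := by
        have := mul_le_mul_of_nonneg_left (by linarith :
          (∏ i ∈ Finset.Icc 1 (k+4), d i) - 3 ≤ ∏ i ∈ Finset.Icc 1 (k+4), d i) hfact0
        linarith
    _ = ((k+4).factorial : ℤ) * ∏ i ∈ Finset.range (k+4), d (1+i) := by rw [hconvP]
    _ ≤ ∏ j ∈ Finset.range (k+4), (A - 2*(j:ℤ)) := keyA
    _ ≤ (A-((k:ℤ)+4))*(A-((k:ℤ)+4)-1) * ∏ j ∈ Finset.range (k+2), (A-(1+(j:ℤ))) := keyB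
    _ = ((∑ i ∈ Finset.Icc 1 (k+4), d i) - ((k+4:ℕ):ℤ)) *
        ((∑ i ∈ Finset.Icc 1 (k+4), d i) - ((k+4:ℕ):ℤ) - 1) *
        ∏ i ∈ Finset.Icc 1 (k+4-2), ((∑ j ∈ Finset.Icc 1 (k+4), d j) - (i : ℤ)) := by
        rw [hconvP2, hconvS]; push_cast; ring
end

section
/- If $n \geq 4$ and $\alpha \geq 2n$ is an integer, then $\alpha(\alpha - 2)(\alpha - 4) \cdots (\alpha - 2(n-1)) \leq (\alpha - n)(\alpha - n - 1) \prod_{i=1}^{n-2}(\alpha - i)$. -/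
theorem stmt13 (n : ℕ) (hn : 4 ≤ n) (α : ℤ) (hα : 2 * n ≤ α) :
    (∏ k ∈ Finset.range n, (α - 2 * (k : ℤ))) ≤
      (α - n) * (α - n - 1) * ∏ i ∈ Finset.Icc 1 (n - 2), (α - (i : ℤ)) := by
  induction n, hn using Nat.le_induction generalizing α with
  | base =>
    have h8 : (8:ℤ) ≤ α := by omega
    rw [show (4:ℕ) - 2 = 2 from rfl, show (Finset.Icc 1 2 : Finset ℕ) = {1, 2} from rfl]
    simp [Finset.prod_range_succ]
    nlinarith [sq_nonneg α, sq_nonneg (α - 4), sq_nonneg (α - 2)]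
  | succ n hn ih =>
    have hA := ih α (by omega)
    rw [Finset.prod_range_succ, show n + 1 - 2 = (n - 2) + 1 from by omega,
      Finset.prod_Icc_succ_top (by omega : 1 ≤ n - 2 + 1)]
    have hc : ((n - 2 + 1 : ℕ) : ℤ) = (n : ℤ) - 1 := by omega
    rw [hc]
    set A := ∏ k ∈ Finset.range n, (α - 2 * (k : ℤ)) with hAdef
    set P := ∏ i ∈ Finset.Icc 1 (n - 2), (α - (i : ℤ)) with hPdef
    have hP : 0 ≤ P := by
      refine Finset.prod_nonneg fun i hi => ?_
      have h2 := (Finset.mem_Icc.mp hi).2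
      omega
    have h2n : (0:ℤ) ≤ α - 2 * n := by omega
    have hnn : (0:ℤ) ≤ α - n - 1 := by omega
    have key : (α - (n:ℤ)) * (α - 2 * n) ≤ (α - n - 2) * (α - n + 1) := by
      have hn4 : (4:ℤ) ≤ (n:ℤ) := by omega
      have ha2 : 2 * (n:ℤ) + 2 ≤ α := by omega
      nlinarith
    have t1 : A * (α - 2 * n) ≤ ((α - n) * (α - n - 1) * P) * (α - 2 * n) :=
      mul_le_mul_of_nonneg_right hA h2n
    have t2 : ((α - (n:ℤ) - 1) * P) * ((α - n) * (α - 2 * n)) ≤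
        ((α - (n:ℤ) - 1) * P) * ((α - n - 2) * (α - n + 1)) :=
      mul_le_mul_of_nonneg_left key (mul_nonneg hnn hP)
    push_cast
    nlinarith [t1, t2]
end

section
/- Let $n \geq 4$ and $d_1 \leq \cdots \leq d_n$ be integers with each $d_i \geq 2$. Let $\alpha = \sum_{i=1}^n d_i$ and $d = \prod_{i=1}^n d_i$. Then $(\alpha - 2)\prod_{i=1}^{n-1}\sum_{j=1}^i d_j \leq n!(d - 3)$. -/
lemma pow_aux : ∀ k, 4 ≤ k → 3 * k ≤ 2 ^ k := by
  intro k hk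
  induction k with
  | zero => omega
  | succ m ih =>
    rcases Nat.lt_or_ge m 4 with h | h
    · interval_cases m <;> simp_all <;> omega
    · have := ih (by omega)
      have h3 : 3 ≤ 2 ^ m := by
        calc 3 ≤ 3 * m := by omega
        _ ≤ 2 ^ m := this
      have : 2 ^ (m + 1) = 2 ^ m + 2 ^ m := by ring
      omega

theorem stmt16 (n : ℕ) (hn : 4 ≤ n) (d : ℕ → ℤ)
    (hd2 : ∀ i, 1 ≤ i → i ≤ n → 2 ≤ d i)
    (hmono : ∀ i j, 1 ≤ i → i ≤ j → j ≤ n → d i ≤ d j) :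
    ((∑ i ∈ Finset.Icc 1 n, d i) - 2) *
        ∏ i ∈ Finset.Icc 1 (n - 1), ∑ j ∈ Finset.Icc 1 i, d j ≤
      (n.factorial : ℤ) * ((∏ i ∈ Finset.Icc 1 n, d i) - 3) := by
  obtain ⟨m, rfl⟩ : ∃ m, n = m + 1 := ⟨n - 1, by omega⟩
  have hm : 3 ≤ m := by omega
  simp only [Nat.add_sub_cancel]
  set P : ℤ := ∏ i ∈ Finset.Icc 1 m, d i with hP
  -- each partial sum bounded
  have hSle : ∀ i ∈ Finset.Icc 1 m, (∑ j ∈ Finset.Icc 1 i, d j) ≤ (i : ℤ) * d i := by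
    intro i hi
    simp only [Finset.mem_Icc] at hi
    have := Finset.sum_le_card_nsmul (Finset.Icc 1 i) d (d i) (by
      intro j hj
      simp only [Finset.mem_Icc] at hj
      exact hmono j i hj.1 hj.2 (by omega))
    simpa [Nat.card_Icc, nsmul_eq_mul] using this
  have hSnn : ∀ i ∈ Finset.Icc 1 m, (0 : ℤ) ≤ ∑ j ∈ Finset.Icc 1 i, d j := by
    intro i hi
    simp only [Finset.mem_Icc] at hi
    apply Finset.sum_nonneg
    intro j hj
    simp only [Finset.mem_Icc] at hj
    have := hd2 j hj.1 (by omega)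
    omega
  have hprod1 : (∏ i ∈ Finset.Icc 1 m, ∑ j ∈ Finset.Icc 1 i, d j)
      ≤ ∏ i ∈ Finset.Icc 1 m, ((i : ℤ) * d i) :=
    Finset.prod_le_prod hSnn hSle
  have hsplit : (∏ i ∈ Finset.Icc 1 m, ((i : ℤ) * d i)) = (m.factorial : ℤ) * P := by
    rw [Finset.prod_mul_distrib]
    congr 1
    rw [← Nat.cast_prod]
    norm_cast
    rw [← Finset.Ico_add_one_right_eq_Icc]
    exact Finset.prod_Ico_id_eq_factorial m
  have hdnn : ∀ i ∈ Finset.Icc 1 m, (0 : ℤ) ≤ d i := by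
    intro i hi
    simp only [Finset.mem_Icc] at hi
    have := hd2 i hi.1 (by omega)
    omega
  have hPnn : (0 : ℤ) ≤ P := Finset.prod_nonneg hdnn
  have hP2 : (2 : ℤ) ^ m ≤ P := by
    have := Finset.prod_le_prod (f := fun _ => (2 : ℤ)) (g := d)
      (s := Finset.Icc 1 m) (by intro i hi; norm_num)
      (by intro i hi; simp only [Finset.mem_Icc] at hi; exact hd2 i hi.1 (by omega))
    simpa [Nat.card_Icc] using this
  have htop : (∏ i ∈ Finset.Icc 1 (m + 1), d i) = P * d (m + 1) := by
    rw [Finset.prod_Icc_succ_top (by omega : 1 ≤ m + 1)]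
  have halpha : (∑ i ∈ Finset.Icc 1 (m + 1), d i) ≤ ((m : ℤ) + 1) * d (m + 1) := by
    have := Finset.sum_le_card_nsmul (Finset.Icc 1 (m + 1)) d (d (m + 1)) (by
      intro j hj
      simp only [Finset.mem_Icc] at hj
      exact hmono j (m + 1) hj.1 hj.2 le_rfl)
    simpa [Nat.card_Icc, nsmul_eq_mul, add_mul] using this
  have hAnn : (0 : ℤ) ≤ (∑ i ∈ Finset.Icc 1 (m + 1), d i) - 2 := by
    have := Finset.card_nsmul_le_sum (Finset.Icc 1 (m + 1)) d 2 (by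
      intro j hj
      simp only [Finset.mem_Icc] at hj
      exact hd2 j hj.1 hj.2)
    simp only [Nat.card_Icc, Nat.add_sub_cancel, nsmul_eq_mul] at this
    have : (2 : ℤ) * (m + 1) ≤ ∑ i ∈ Finset.Icc 1 (m + 1), d i := by
      push_cast at this ⊢; linarith
    have hm' : (3 : ℤ) ≤ (m : ℤ) := by exact_mod_cast hm
    linarith
  have hkey : 3 * ((m + 1).factorial : ℤ) ≤ 2 * (m.factorial : ℤ) * P := by
    have h1 : 3 * (m + 1) ≤ 2 ^ (m + 1) := pow_aux (m + 1) (by omega)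
    have h2 : (3 : ℤ) * ((m : ℤ) + 1) ≤ 2 * 2 ^ m := by
      have := h1
      push_cast [pow_succ] at *
      linarith
    have hfpos : (0 : ℤ) < (m.factorial : ℤ) := by exact_mod_cast m.factorial_pos
    calc 3 * ((m + 1).factorial : ℤ) = (3 * ((m : ℤ) + 1)) * (m.factorial : ℤ) := by
          rw [Nat.factorial_succ]; push_cast; ring
      _ ≤ (2 * 2 ^ m) * (m.factorial : ℤ) := by
          exact mul_le_mul_of_nonneg_right h2 (le_of_lt hfpos)
      _ ≤ 2 * (m.factorial : ℤ) * P := by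
          have := mul_le_mul_of_nonneg_left hP2 (le_of_lt (by positivity : (0:ℤ) < 2 * (m.factorial : ℤ)))
          linarith
  have hfact : ((m + 1).factorial : ℤ) = ((m : ℤ) + 1) * (m.factorial : ℤ) := by
    rw [Nat.factorial_succ]; push_cast; ring
  have hQle : (∏ i ∈ Finset.Icc 1 m, ∑ j ∈ Finset.Icc 1 i, d j) ≤ (m.factorial : ℤ) * P := by
    rw [← hsplit]; exact hprod1
  calc ((∑ i ∈ Finset.Icc 1 (m + 1), d i) - 2) *
        ∏ i ∈ Finset.Icc 1 m, ∑ j ∈ Finset.Icc 1 i, d j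
      ≤ ((∑ i ∈ Finset.Icc 1 (m + 1), d i) - 2) * ((m.factorial : ℤ) * P) :=
        mul_le_mul_of_nonneg_left hQle hAnn
    _ ≤ (((m : ℤ) + 1) * d (m + 1) - 2) * ((m.factorial : ℤ) * P) := by
        apply mul_le_mul_of_nonneg_right (by linarith) (by positivity)
    _ ≤ ((m + 1).factorial : ℤ) * ((∏ i ∈ Finset.Icc 1 (m + 1), d i) - 3) := by
        rw [htop, hfact]
        nlinarith [hkey, hPnn]
end
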